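/- For any unit quaternion (η̃, q̃), the operator norm of the matrix η̃ I − S(q̃) equals 1. -/

import Mathlib

open Matrix

noncomputable section

/-- The skew-symmetric (cross-product) matrix `S(x)`, satisfying `S(x) y = x × y`. -/
def sk (x : Fin 3 → ℝ) : Matrix (Fin 3) (Fin 3) ℝ :=
  !![0, -x 2, x 1; x 2, 0, -x 0; -x 1, x 0, 0]

/-- The Euclidean norm of a vector in ℝ³. -/
def vnorm (x : Fin 3 → ℝ) : ℝ := Real.sqrt (x ⬝ᵥ x)

/-- The operator (spectral) norm of a 3×3 real matrix. -/
def opNorm (M : Matrix (Fin 3) (Fin 3) ℝ) : ℝ :=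
  ‖(Matrix.toEuclideanCLM (𝕜 := ℝ) M : EuclideanSpace ℝ (Fin 3) →L[ℝ] EuclideanSpace ℝ (Fin 3))‖

/-! `(η • 1 - S q) x = η • x - q × x`, and since `x ⊥ q × x`, Lagrange's identity gives
`‖η • x - q × x‖² = (η² + ‖q‖²) ‖x‖² - ⟪q, x⟫²`. Hence the operator norm is at most
`√(η² + ‖q‖²)`, with equality on any nonzero `x ⊥ q`. -/

theorem sk_mulVec (x y : Fin 3 → ℝ) : sk x *ᵥ y = x ⨯₃ y := by
  ext i; fin_cases i <;> simp [sk, cross_apply, Matrix.mulVec, dotProduct, Fin.sum_univ_three] <;> ring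

theorem dotProduct_self_smul_sub_cross {R : Type*} [CommRing R] (η : R) (q x : Fin 3 → R) :
    (η • x - q ⨯₃ x) ⬝ᵥ (η • x - q ⨯₃ x) = (η ^ 2 + q ⬝ᵥ q) * (x ⬝ᵥ x) - (q ⬝ᵥ x) ^ 2 := by
  simp only [sub_dotProduct, dotProduct_sub, smul_dotProduct, dotProduct_smul, smul_eq_mul,
    dot_cross_self, cross_dot_cross, dotProduct_comm (crossProduct q x) x]
  rw [dotProduct_comm x q]
  ring

theorem exists_ne_zero_inner_eq_zero {E : Type*} [NormedAddCommGroup E] [InnerProductSpace ℝ E]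
    [FiniteDimensional ℝ E] (hE : 1 < Module.finrank ℝ E) (v : E) :
    ∃ x ≠ 0, inner ℝ v x = 0 := by
  have hspan : (ℝ ∙ v) ≠ ⊤ := by
    intro h
    have := finrank_span_le_card (R := ℝ) ({v} : Set E)
    rw [h, finrank_top] at this
    simp only [Set.toFinset_singleton, Finset.card_singleton] at this
    omega
  obtain ⟨x, hx, hx0⟩ := Submodule.exists_mem_ne_zero_of_ne_bot
    (mt Submodule.orthogonal_eq_bot_iff.mp hspan)
  exact ⟨x, hx0, Submodule.mem_orthogonal_singleton_iff_inner_right.mp hx⟩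

theorem ContinuousLinearMap.norm_eq_sqrt_of_norm_sq_eq {E F : Type*} [NormedAddCommGroup E]
    [InnerProductSpace ℝ E] [FiniteDimensional ℝ E] [SeminormedAddCommGroup F] [NormedSpace ℝ F]
    (hE : 1 < Module.finrank ℝ E) (f : E →L[ℝ] F) (c : ℝ) (v : E)
    (hf : ∀ x, ‖f x‖ ^ 2 = c * ‖x‖ ^ 2 - inner ℝ v x ^ 2) : ‖f‖ = √c := by
  have norm_eq (x : E) : ‖f x‖ = √(c * ‖x‖ ^ 2 - inner ℝ v x ^ 2) := by
    rw [← hf, Real.sqrt_sq (norm_nonneg _)]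
  have sqrt_mul_sq (x : E) : √(c * ‖x‖ ^ 2) = √c * ‖x‖ := by
    rw [Real.sqrt_mul' _ (sq_nonneg _), Real.sqrt_sq (norm_nonneg _)]
  obtain ⟨x₀, hx₀, hvx₀⟩ := exists_ne_zero_inner_eq_zero hE v
  have hfx₀ : ‖f x₀‖ = √c * ‖x₀‖ := by
    rw [norm_eq, hvx₀, zero_pow two_ne_zero, sub_zero, sqrt_mul_sq]
  refine opNorm_eq_of_bounds (Real.sqrt_nonneg c) (fun x ↦ ?_) (fun N _ hN ↦ ?_)
  · calc ‖f x‖ ≤ √(c * ‖x‖ ^ 2) := by rw [norm_eq]; gcongr; nlinarith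
      _ = √c * ‖x‖ := sqrt_mul_sq x
  · exact le_of_mul_le_mul_right (hfx₀ ▸ hN x₀) (norm_pos_iff.mpr hx₀)

theorem norm_toEuclideanCLM_smul_one_sub_sk_sq (η : ℝ) (q : Fin 3 → ℝ)
    (x : EuclideanSpace ℝ (Fin 3)) :
    ‖toEuclideanCLM (𝕜 := ℝ) (η • 1 - sk q) x‖ ^ 2
      = (η ^ 2 + ‖WithLp.toLp 2 q‖ ^ 2) * ‖x‖ ^ 2 - inner ℝ (WithLp.toLp 2 q) x ^ 2 := by
  simp only [← real_inner_self_eq_norm_sq, EuclideanSpace.inner_eq_star_dotProduct, star_trivial,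
    ofLp_toEuclideanCLM, sub_mulVec, smul_mulVec, one_mulVec, sk_mulVec]
  rw [dotProduct_self_smul_sub_cross, dotProduct_comm x.ofLp q]

theorem vnorm_eq_norm_toLp (q : Fin 3 → ℝ) : vnorm q = ‖WithLp.toLp 2 q‖ := by
  rw [vnorm, norm_eq_sqrt_real_inner, EuclideanSpace.inner_toLp_toLp, star_trivial]

theorem opNorm_smul_one_sub_sk (η : ℝ) (q : Fin 3 → ℝ) :
    opNorm (η • 1 - sk q) = √(η ^ 2 + vnorm q ^ 2) := by
  rw [vnorm_eq_norm_toLp]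
  exact ContinuousLinearMap.norm_eq_sqrt_of_norm_sq_eq (by simp) _ _ _
    (norm_toEuclideanCLM_smul_one_sub_sk_sq η q)

theorem opNorm_eta_smul_id_sub_skew (ηt : ℝ) (qt : Fin 3 → ℝ)
    (hQ : ηt ^ 2 + vnorm qt ^ 2 = 1) :
    opNorm (ηt • (1 : Matrix (Fin 3) (Fin 3) ℝ) - sk qt) = 1 := by
  rw [opNorm_smul_one_sub_sk, hQ, Real.sqrt_one]

end
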